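/- arXiv:1701.04227 — 2 statements merged into one kernel-verified Lean document; each statement's English description precedes it below -/
import Mathlib

section
/- If S is a k-special sequence, then any two equal entries of S are at least 2k apart: s_i = s_j with i < j implies j ≥ i + 2k. -/
/-- `i 1, …, i (2r)` (1-indexed) is a `k`-bad index sequence for the 1-indexed sequence `S`,
with turning index `m`: the symbols form a repetition, the indices strictly decrease up to
position `m` and then strictly increase, consecutive indices differ by at most `k`, and the
gap at the turn is strictly less than `k` when the turn is internal. -/
def KBadIdx {α : Type*} (k : ℕ) (S : ℕ → α) (r m : ℕ) (i : ℕ → ℕ) : Prop :=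
  1 ≤ r ∧ 1 < m ∧ m ≤ 2 * r ∧
  (∀ j, 1 ≤ j → j ≤ r → S (i j) = S (i (j + r))) ∧
  (∀ j, 1 ≤ j → j < m → i (j + 1) < i j) ∧
  (∀ j, m ≤ j → j < 2 * r → i j < i (j + 1)) ∧
  (∀ j, 1 ≤ j → j < 2 * r → i (j + 1) ≤ i j + k ∧ i j ≤ i (j + 1) + k) ∧
  (m < 2 * r → i (m + 1) < i m + k)

/-- A finite sequence `S` (1-indexed, of length `n`) is `k`-special if it admits no
`k`-bad index sequence with all indices in `{1, …, n}`. -/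
def KSpecialFin {α : Type*} (k : ℕ) (S : ℕ → α) (n : ℕ) : Prop :=
  ¬ ∃ r m i, KBadIdx k S r m i ∧ ∀ j, 1 ≤ j → j ≤ 2 * r → 1 ≤ i j ∧ i j ≤ n

/-- An infinite sequence `S` (1-indexed) is `k`-special if it admits no `k`-bad index
sequence. -/
def KSpecialInf {α : Type*} (k : ℕ) (S : ℕ → α) : Prop :=
  ¬ ∃ r m i, KBadIdx k S r m i ∧ ∀ j, 1 ≤ j → j ≤ 2 * r → 1 ≤ i j

/-- The sequence `S_{n,c} = 1, 2, …, n, 1, 2, …, c` (1-indexed; entry at position `i` is `i`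
for `i ≤ n` and `i - n` for `i > n`). -/
def Snc (n : ℕ) (c : ℕ) : ℕ → ℕ := fun i => if i ≤ n then i else i - n
/-!
If `S p = S q` with `p < q < p + 2k`, two short index sequences witness that `S` is not
`k`-special. When `q ≤ p + k`, the pair `(q, p)` is decreasing and its symbols form the
square `xx`. Otherwise `q - k` lies strictly between `p` and `q`, within distance `k` of both,
so `(q, q - k, p, q - k)` descends to `p`, turns there with a gap `< k`, and its symbols
`S q, S (q - k), S p, S (q - k)` form the square `xyxy`.
-/

section

variable {α : Type*} {k : ℕ} {S : ℕ → α} {p q : ℕ}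

lemma kBadIdx_pair (hpq : p < q) (hqk : q ≤ p + k) (heq : S p = S q) :
    KBadIdx k S 1 2 (fun j => if j ≤ 1 then q else p) := by
  refine ⟨le_rfl, one_lt_two, le_rfl, ?_, ?_, ?_, ?_, ?_⟩
  · intro j h1 h2
    obtain rfl : j = 1 := by omega
    simp [heq]
  all_goals intros; dsimp only; split_ifs <;> omega

lemma kBadIdx_zigzag (hkq : p + k < q) (hq : q < p + 2 * k) (heq : S p = S q) :
    KBadIdx k S 2 3 (fun j => if j = 1 then q else if j = 3 then p else q - k) := by
  refine ⟨by norm_num, by norm_num, by norm_num, ?_, ?_, ?_, ?_, ?_⟩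
  · intro j h1 h2
    interval_cases j <;> simp [heq]
  all_goals intros; dsimp only; split_ifs <;> omega

end

theorem stmt6_general {α : Type*} (k : ℕ) (S : ℕ → α) (hS : KSpecialInf k S) :
    ∀ p q : ℕ, 1 ≤ p → p < q → S p = S q → p + 2 * k ≤ q := by
  intro p q hp hpq heq
  by_contra! hclose
  rcases le_or_gt q (p + k) with hnear | hfar
  · exact hS ⟨1, 2, _, kBadIdx_pair hpq hnear heq, fun j _ _ => by split <;> omega⟩
  · exact hS ⟨2, 3, _, kBadIdx_zigzag hfar hclose heq, fun j _ _ => by split_ifs <;> omega⟩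

/-- In a `k`-special sequence, equal entries are at least `2k` apart: `S p = S q` with
`p < q` implies `q ≥ p + 2k`. -/
theorem stmt6 {α : Type*} (k : ℕ) (hk : 1 ≤ k) (S : ℕ → α) (hS : KSpecialInf k S) :
    ∀ p q : ℕ, 1 ≤ p → p < q → S p = S q → p + 2 * k ≤ q :=
  stmt6_general k S hS
end

section
/- If n ≥ 2k+1, then the sequence S_{n,n−k} = 1,2,...,n,1,2,...,n−k is k-special; consequently f_k(n) ≥ 2n − k for n ≥ 2k+1. -/
/-!
If equal symbols of a sequence of length `L ≤ 2n - k` only occur at positions congruent mod `n`,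
then along a bad index sequence the offsets `i (j + r) - i j` are multiples of `n`. Consecutive
offsets differ by at most `2k < n`, so the offset is a constant multiple of `n`. A zero offset
contradicts the V-shape of the indices (`i (r + 1) = i 1` or `i (2r) = i r` would repeat a value on
a strictly monotone stretch). An offset `≥ n` puts `i (r + 1) ≥ n + 1` and `i r ≤ L - n ≤ n - k`
(symmetrically for `≤ -n`), so the step from `i r` to `i (r + 1)` would exceed `k`.
-/

lemma eq_of_forall_dvd_of_abs_sub_lt {n : ℤ} {d : ℕ → ℤ} {a b : ℕ} (hab : a ≤ b)
    (hdvd : ∀ j, a ≤ j → j ≤ b → n ∣ d j)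
    (hstep : ∀ j, a ≤ j → j < b → |d (j + 1) - d j| < n) : d b = d a := by
  induction b, hab using Nat.le_induction with
  | base => rfl
  | succ b hab ih =>
    have hzero : d (b + 1) - d b = 0 :=
      Int.eq_zero_of_abs_lt_dvd (dvd_sub (hdvd _ hab.step le_rfl) (hdvd b hab b.le_succ))
        (hstep b hab b.lt_succ_self)
    rw [← ih (fun j h₁ h₂ => hdvd j h₁ (Nat.le_succ_of_le h₂))
      (fun j h₁ h₂ => hstep j h₁ (Nat.lt_succ_of_lt h₂))]
    linarith

namespace KBadIdx

variable {α : Type*} {k : ℕ} {S : ℕ → α} {r m : ℕ} {i : ℕ → ℕ}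

lemma strictAntiOn_Icc (h : KBadIdx k S r m i) : StrictAntiOn i (Set.Icc 1 m) := by
  obtain ⟨-, -, -, -, hdec, -⟩ := h
  exact strictAntiOn_of_add_one_lt Set.ordConnected_Icc fun a _ ha ha' => hdec a ha.1 ha'.2

lemma strictMonoOn_Icc (h : KBadIdx k S r m i) : StrictMonoOn i (Set.Icc m (2 * r)) := by
  obtain ⟨-, -, -, -, -, hinc, -⟩ := h
  exact strictMonoOn_of_lt_add_one Set.ordConnected_Icc fun a _ ha ha' => hinc a ha.1 ha'.2

lemma not_shift_eq (h : KBadIdx k S r m i) : ¬ (i (1 + r) = i 1 ∧ i (r + r) = i r) := by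
  rintro ⟨hfirst, hlast⟩
  have hr : 1 ≤ r := h.1
  rcases lt_or_ge r m with hrm | hrm
  · exact (h.strictAntiOn_Icc ⟨le_rfl, by omega⟩ ⟨by omega, by omega⟩ (by omega)).ne hfirst
  · exact (h.strictMonoOn_Icc ⟨hrm, by omega⟩ ⟨by omega, by omega⟩ (by omega)).ne hlast.symm

lemma abs_shift_sub_le (h : KBadIdx k S r m i) {j : ℕ} (hj : 1 ≤ j) (hjr : j < r) :
    |((i (j + 1 + r) : ℤ) - i (j + 1)) - ((i (j + r) : ℤ) - i j)| ≤ 2 * k := by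
  obtain ⟨-, -, -, -, -, -, hstep, -⟩ := h
  have h₁ := hstep j hj (by omega)
  have h₂ := hstep (j + r) (by omega) (by omega)
  rw [show j + 1 + r = j + r + 1 by omega, abs_le]
  omega

end KBadIdx

theorem kSpecialFin_of_modEq {α : Type*} {k n L : ℕ} {S : ℕ → α}
    (hS : ∀ p q, S p = S q → p ≡ q [MOD n]) (hkn : 2 * k < n) (hL : L + k ≤ 2 * n) :
    KSpecialFin k S L := by
  rintro ⟨r, m, i, hbad, hrange⟩
  obtain ⟨hr, -, -, hsym, -, -, hstep, -⟩ := id hbad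
  have hdvd : ∀ j, 1 ≤ j → j ≤ r → (n : ℤ) ∣ (i (j + r) : ℤ) - i j := fun j h₁ h₂ =>
    Nat.modEq_iff_dvd.mp (hS _ _ (hsym j h₁ h₂))
  have hconst : (i (r + r) : ℤ) - i r = (i (1 + r) : ℤ) - i 1 :=
    eq_of_forall_dvd_of_abs_sub_lt (d := fun j => (i (j + r) : ℤ) - i j) hr hdvd
      fun j h₁ h₂ => (hbad.abs_shift_sub_le h₁ h₂).trans_lt (by omega)
  have hfirst := hrange 1 le_rfl (by omega)
  have hlast := hrange (r + r) (by omega) (by omega)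
  have hjunction := hstep r hr (by omega)
  rw [show r + 1 = 1 + r by omega] at hjunction
  rcases lt_trichotomy ((i (1 + r) : ℤ) - i 1) 0 with hneg | hzero | hpos
  · have := Int.le_of_dvd (by omega) (dvd_neg.mpr (hdvd 1 le_rfl hr))
    omega
  · exact hbad.not_shift_eq ⟨by omega, by omega⟩
  · have := Int.le_of_dvd hpos (hdvd 1 le_rfl hr)
    omega

lemma Snc_modEq (n : ℕ) {c : ℕ} (p : ℕ) : Snc n c p ≡ p [MOD n] := by
  unfold Snc
  split_ifs with hp
  · rfl
  · exact (Nat.modEq_iff_dvd' (Nat.sub_le p n)).mpr (by rw [Nat.sub_sub_self (by omega)])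

lemma image_Snc_subset {n c L : ℕ} (hL : L ≤ 2 * n) :
    (Finset.Icc 1 L).image (Snc n c) ⊆ Finset.Icc 1 n := by
  intro x hx
  simp only [Finset.mem_image, Finset.mem_Icc] at hx ⊢
  obtain ⟨p, ⟨hp₁, hp₂⟩, rfl⟩ := hx
  unfold Snc
  split_ifs <;> omega

theorem stmt10_general (k n : ℕ) (hn : 2 * k + 1 ≤ n) :
    KSpecialFin k (Snc n (n - k)) (2 * n - k) ∧
    ∃ (S : ℕ → ℕ) (L : ℕ), L = 2 * n - k ∧
      ((Finset.Icc 1 L).image S).card ≤ n ∧ KSpecialFin k S L := by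
  have hspecial : KSpecialFin k (Snc n (n - k)) (2 * n - k) :=
    kSpecialFin_of_modEq (fun p q h => (Snc_modEq n p).symm.trans (h ▸ Snc_modEq n q))
      (by omega) (by omega)
  refine ⟨hspecial, Snc n (n - k), 2 * n - k, rfl, ?_, hspecial⟩
  calc ((Finset.Icc 1 (2 * n - k)).image (Snc n (n - k))).card
      ≤ (Finset.Icc 1 n).card := Finset.card_le_card (image_Snc_subset (by omega))
    _ = n := Nat.card_Icc 1 n

/-- If `n ≥ 2k + 1`, then `S_{n,n-k} = 1, …, n, 1, …, n-k` (of length `2n - k`) is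
`k`-special; consequently `f_k(n) ≥ 2n - k`: there is a `k`-special sequence of length
`2n - k` on at most `n` symbols. -/
theorem stmt10 (k n : ℕ) (hk : 1 ≤ k) (hn : 2 * k + 1 ≤ n) :
    KSpecialFin k (Snc n (n - k)) (2 * n - k) ∧
    ∃ (S : ℕ → ℕ) (L : ℕ), L = 2 * n - k ∧
      ((Finset.Icc 1 L).image S).card ≤ n ∧ KSpecialFin k S L :=
  stmt10_general k n hn
end
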